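/- Let f be a homeomorphism of a compact metric space X, M a connected minimal set for f, and U a periodic connected component of X \ M of period p. Define r(x) = #{0 ≤ k < p : x ∈ ∂f^k(U)} for x ∈ M. Then r is constant on M. -/

import Mathlib

open Topology Set

def IsMinimalSet {X : Type*} [TopologicalSpace X] (f : X ≃ₜ X) (M : Set X) : Prop :=
  M.Nonempty ∧ IsClosed M ∧ f '' M = M ∧
    ∀ x ∈ M, closure (Set.range fun n : ℤ => (f.toEquiv ^ n) x) = M

/-!
The count `r` is invariant under `f`, because `f` maps the boundary of `f^k(U)` onto that of
`f^(k+1)(U)` and the boundaries are `p`-periodic in `k`. It is upper semicontinuous, because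
a point outside a boundary stays outside it nearby. Every orbit of `M` is dense in `M`, so an
invariant upper semicontinuous function is constant there.
-/

open Filter Finset

theorem Finset.sum_range_succ_eq_of_apply_eq {M : Type*} [AddCancelCommMonoid M] {a : ℕ → M}
    {p : ℕ} (h : a p = a 0) : ∑ k ∈ range p, a (k + 1) = ∑ k ∈ range p, a k := by
  apply add_right_cancel (b := a 0)
  rw [← sum_range_succ', sum_range_succ, h]

open Classical in
noncomputable def hitCount {X : Type*} (C : ℕ → Set X) (p : ℕ) (z : X) : ℕ :=
  #{k ∈ range p | z ∈ C k}

section hitCount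

variable {X : Type*} {C : ℕ → Set X} {p : ℕ}

theorem hitCount_eq_ncard (z : X) : hitCount C p z = {k | k < p ∧ z ∈ C k}.ncard := by
  rw [hitCount, ← Set.ncard_coe_finset]
  congr 1
  ext k
  simp

theorem hitCount_apply_eq_of_shift {f : X → X} (hf : ∀ z k, f z ∈ C (k + 1) ↔ z ∈ C k)
    (hC : C p = C 0) (z : X) : hitCount C p (f z) = hitCount C p z := by
  classical
  simp only [hitCount, card_filter]
  rw [← sum_range_succ_eq_of_apply_eq (a := fun k => if f z ∈ C k then 1 else 0) (by simp [hC])]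
  simp only [hf]

theorem upperSemicontinuous_hitCount [TopologicalSpace X] (hC : ∀ k, IsClosed (C k)) :
    UpperSemicontinuous (hitCount C p) := by
  intro z n hz
  have hnear : ∀ᶠ w in 𝓝 z, ∀ k ∈ range p, z ∉ C k → w ∉ C k :=
    (eventually_all_finset _).2 fun k _ => by
      by_cases hk : z ∈ C k
      · exact .of_forall fun _ h => absurd hk h
      · exact ((hC k).isOpen_compl.eventually_mem hk).mono fun _ hw _ => hw
  refine hnear.mono fun w hw => lt_of_le_of_lt (card_le_card fun k => ?_) hz
  simp only [mem_filter]
  exact fun ⟨hk, hwk⟩ => ⟨hk, not_not.1 fun hzk => hw k hk hzk hwk⟩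

end hitCount

section Minimal

variable {X β : Type*} [TopologicalSpace X] {f : X ≃ₜ X} {r : X → β}

theorem apply_zpow_eq_of_apply_eq (hr : ∀ z, r (f z) = r z) (n : ℤ) (z : X) :
    r ((f.toEquiv ^ n) z) = r z := by
  refine zpow_induction_left (P := fun σ : Equiv.Perm X => r (σ z) = r z) rfl
    (fun σ ih => ?_) (fun σ ih => ?_) n
  · exact (hr (σ z)).trans ih
  · rw [← ih, ← hr ((f.toEquiv⁻¹ * σ) z)]
    simp

theorem le_of_mem_closure_orbit [LinearOrder β] (hr : UpperSemicontinuous r)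
    (hinv : ∀ z, r (f z) = r z) {x y : X}
    (hx : x ∈ closure (range fun n : ℤ => (f.toEquiv ^ n) y)) : r y ≤ r x := by
  by_contra! hlt
  obtain ⟨w, hw, n, rfl⟩ :=
    ((hr x (r y) hlt).and_frequently (mem_closure_iff_frequently.1 hx)).exists
  exact hw.ne (apply_zpow_eq_of_apply_eq hinv n y)

theorem IsMinimalSet.apply_eq_of_upperSemicontinuous [LinearOrder β] {M : Set X}
    (hM : IsMinimalSet f M) (hr : UpperSemicontinuous r) (hinv : ∀ z, r (f z) = r z)
    {x y : X} (hx : x ∈ M) (hy : y ∈ M) : r x = r y := by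
  obtain ⟨-, -, -, hdense⟩ := hM
  exact le_antisymm (le_of_mem_closure_orbit hr hinv (hdense x hx ▸ hy))
    (le_of_mem_closure_orbit hr hinv (hdense y hy ▸ hx))

end Minimal

theorem Homeomorph.apply_mem_frontier_iterate_image_succ {X : Type*} [TopologicalSpace X]
    (f : X ≃ₜ X) (U : Set X) (z : X) (k : ℕ) :
    f z ∈ frontier (f^[k + 1] '' U) ↔ z ∈ frontier (f^[k] '' U) := by
  rw [Function.iterate_succ', image_comp, ← f.image_frontier, f.injective.mem_set_image]

theorem stmt3_general {X : Type*} [MetricSpace X] (f : X ≃ₜ X)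
    (M : Set X) (hM : IsMinimalSet f M)
    (U : Set X)
    (p : ℕ) (hper : (⇑f)^[p] '' U = U) :
    ∀ x ∈ M, ∀ y ∈ M,
      {k : ℕ | k < p ∧ x ∈ frontier ((⇑f)^[k] '' U)}.ncard =
        {k : ℕ | k < p ∧ y ∈ frontier ((⇑f)^[k] '' U)}.ncard := by
  intro x hx y hy
  simp only [← hitCount_eq_ncard]
  have hinv (z : X) : hitCount (fun k => frontier ((⇑f)^[k] '' U)) p (f z) =
      hitCount (fun k => frontier ((⇑f)^[k] '' U)) p z :=
    hitCount_apply_eq_of_shift (f.apply_mem_frontier_iterate_image_succ U) (by simp [hper]) z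
  exact hM.apply_eq_of_upperSemicontinuous
    (upperSemicontinuous_hitCount fun _ => isClosed_frontier) hinv hx hy

/-- For a connected minimal set M and a periodic complementary component U of period p,
the function counting in how many of the boundaries of the iterates of U a point lies
is constant on M. -/
theorem stmt3 {X : Type*} [MetricSpace X] [CompactSpace X] (f : X ≃ₜ X)
    (M : Set X) (hM : IsMinimalSet f M) (hMconn : IsConnected M)
    (U : Set X) (hU : ∃ x ∈ Mᶜ, U = connectedComponentIn Mᶜ x)
    (p : ℕ) (hp : 1 ≤ p) (hper : (⇑f)^[p] '' U = U) :
    ∀ x ∈ M, ∀ y ∈ M,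
      {k : ℕ | k < p ∧ x ∈ frontier ((⇑f)^[k] '' U)}.ncard =
        {k : ℕ | k < p ∧ y ∈ frontier ((⇑f)^[k] '' U)}.ncard :=
  stmt3_general f M hM U p hper
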